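/- Let H be an involutory Hopf G-coalgebra of finite type with nonzero two-sided G-integral μ = {μ_g} and nonzero cointegral e ∈ H_1 with μ_1(e) = 1. Then for all g ∈ G, μ_{g^{-1}} ∘ S_g = μ_g, and S_1(e) = e. -/

import Mathlib

open TensorProduct

/-- Cast along an equality of indices, as a linear map. -/
def castLM (k : Type*) [Field k] {G : Type*} (H : G → Type*)
    [∀ g, AddCommGroup (H g)] [∀ g, Module k (H g)] {a b : G} (hab : a = b) :
    H a →ₗ[k] H b where
  toFun x := hab ▸ x
  map_add' x y := by subst hab; rfl
  map_smul' c x := by subst hab; rfl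

/-- A Hopf `G`-coalgebra over a field `k`: a family of `k`-algebras `(H g, mul g, one g)`
together with comultiplication algebra morphisms `Δ g h : H (g*h) → H g ⊗ H h`,
a counit `ε : H 1 → k` and an antipode `S g : H g → H g⁻¹`. -/
structure HopfGCoalgebra (k : Type*) [Field k] (G : Type*) [Group G]
    (H : G → Type*) [∀ g, AddCommGroup (H g)] [∀ g, Module k (H g)] where
  mul : ∀ g : G, H g ⊗[k] H g →ₗ[k] H g
  one : ∀ g : G, H g
  comul : ∀ g h : G, H (g * h) →ₗ[k] H g ⊗[k] H h
  counit : H (1 : G) →ₗ[k] k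
  S : ∀ g : G, H g →ₗ[k] H g⁻¹
  mul_assoc' : ∀ (g : G) (x y z : H g),
    mul g (mul g (x ⊗ₜ[k] y) ⊗ₜ[k] z) = mul g (x ⊗ₜ[k] mul g (y ⊗ₜ[k] z))
  one_mul' : ∀ (g : G) (x : H g), mul g (one g ⊗ₜ[k] x) = x
  mul_one' : ∀ (g : G) (x : H g), mul g (x ⊗ₜ[k] one g) = x
  coassoc : ∀ (g h l : G) (x : H (g * h * l)),
    (TensorProduct.assoc k (H g) (H h) (H l))
      (TensorProduct.map (comul g h) LinearMap.id (comul (g * h) l x))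
    = TensorProduct.map LinearMap.id (comul h l)
        (comul g (h * l) (castLM k H (mul_assoc g h l) x))
  counit_left : ∀ (g : G) (x : H ((1 : G) * g)),
    (TensorProduct.lid k (H g)) (TensorProduct.map counit LinearMap.id (comul 1 g x))
      = castLM k H (one_mul g) x
  counit_right : ∀ (g : G) (x : H (g * (1 : G))),
    (TensorProduct.rid k (H g)) (TensorProduct.map LinearMap.id counit (comul g 1 x))
      = castLM k H (mul_one g) x
  comul_mul : ∀ (g h : G) (x y : H (g * h)),
    comul g h (mul (g * h) (x ⊗ₜ[k] y))
      = TensorProduct.map (mul g) (mul h)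
          ((TensorProduct.tensorTensorTensorComm k (H g) (H h) (H g) (H h))
            (comul g h x ⊗ₜ[k] comul g h y))
  comul_one : ∀ g h : G, comul g h (one (g * h)) = one g ⊗ₜ[k] one h
  counit_mul : ∀ x y : H (1 : G), counit (mul 1 (x ⊗ₜ[k] y)) = counit x * counit y
  counit_one : counit (one 1) = 1
  antipode_left : ∀ (g : G) (x : H (g⁻¹ * g)),
    mul g (TensorProduct.map (castLM k H (inv_inv g) ∘ₗ S g⁻¹) LinearMap.id (comul g⁻¹ g x))
      = counit (castLM k H (inv_mul_cancel g) x) • one g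
  antipode_right : ∀ (g : G) (x : H (g * g⁻¹)),
    mul g (TensorProduct.map LinearMap.id (castLM k H (inv_inv g) ∘ₗ S g⁻¹) (comul g g⁻¹ x))
      = counit (castLM k H (mul_inv_cancel g) x) • one g

/-- A Hopf `G`-coalgebra is involutory if `S g⁻¹ ∘ S g = id`. -/
def HopfGCoalgebra.Involutory {k : Type*} [Field k] {G : Type*} [Group G]
    {H : G → Type*} [∀ g, AddCommGroup (H g)] [∀ g, Module k (H g)]
    (A : HopfGCoalgebra k G H) : Prop :=
  ∀ (g : G) (x : H g), castLM k H (inv_inv g) (A.S g⁻¹ (A.S g x)) = x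

variable {k : Type*} [Field k] {G : Type*} [Group G]
  {H : G → Type*} [∀ g, AddCommGroup (H g)] [∀ g, Module k (H g)]

/-- A left `G`-integral: a family of forms `μ g ∈ H g^*` with
`(id ⊗ μ h) ∘ Δ_{g,h} = μ_{gh}(−) · i_g`. -/
def HopfGCoalgebra.LeftGIntegral (A : HopfGCoalgebra k G H) (μ : ∀ g : G, H g →ₗ[k] k) :
    Prop :=
  ∀ (g h : G) (x : H (g * h)),
    (TensorProduct.rid k (H g)) (TensorProduct.map LinearMap.id (μ h) (A.comul g h x))
      = μ (g * h) x • A.one g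

/-- A right `G`-integral: a family of forms `μ g ∈ H g^*` with
`(μ g ⊗ id) ∘ Δ_{g,h} = μ_{gh}(−) · i_h`. -/
def HopfGCoalgebra.RightGIntegral (A : HopfGCoalgebra k G H) (μ : ∀ g : G, H g →ₗ[k] k) :
    Prop :=
  ∀ (g h : G) (x : H (g * h)),
    (TensorProduct.lid k (H h)) (TensorProduct.map (μ g) LinearMap.id (A.comul g h x))
      = μ (g * h) x • A.one h

/-- A left cointegral in `H 1`: `x · e = ε(x) e`. -/
def HopfGCoalgebra.LeftCointegral (A : HopfGCoalgebra k G H) (e : H (1 : G)) : Prop :=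
  ∀ x : H (1 : G), A.mul 1 (x ⊗ₜ[k] e) = A.counit x • e

/-- A right cointegral in `H 1`: `e · x = ε(x) e`. -/
def HopfGCoalgebra.RightCointegral (A : HopfGCoalgebra k G H) (e : H (1 : G)) : Prop :=
  ∀ x : H (1 : G), A.mul 1 (e ⊗ₜ[k] x) = A.counit x • e

set_option linter.unusedSectionVars false
set_option maxHeartbeats 1000000

section AuxCast
variable {k : Type*} [Field k] {G : Type*} [Group G]
  {H : G → Type*} [∀ g, AddCommGroup (H g)] [∀ g, Module k (H g)]

theorem castLM_eq_id {a : G} (h : a = a) : castLM k H h = LinearMap.id := rfl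

theorem castLM_castLM {a b c : G} (h1 : a = b) (h2 : b = c) (x : H a) :
    castLM k H h2 (castLM k H h1 x) = castLM k H (h1.trans h2) x := by
  subst h1; subst h2; rfl

theorem fam_apply_cast (μ : ∀ g : G, H g →ₗ[k] k) {a b : G} (h : a = b) (x : H a) :
    μ b (castLM k H h x) = μ a x := by subst h; rfl

end AuxCast

section AuxTensor
variable {k : Type*} [Field k] {M N P Q P' Q' : Type*}
  [AddCommGroup M] [AddCommGroup N] [AddCommGroup P] [AddCommGroup Q]
  [AddCommGroup P'] [AddCommGroup Q']
  [Module k M] [Module k N] [Module k P] [Module k Q] [Module k P'] [Module k Q']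

theorem map_map' (f' : P →ₗ[k] P') (g' : Q →ₗ[k] Q') (f : M →ₗ[k] P) (g : N →ₗ[k] Q)
    (t : M ⊗[k] N) :
    TensorProduct.map f' g' (TensorProduct.map f g t)
      = TensorProduct.map (f' ∘ₗ f) (g' ∘ₗ g) t := by
  rw [TensorProduct.map_comp]; rfl

theorem lid_map_comp (f : M →ₗ[k] k) (u : N →ₗ[k] Q) (t : M ⊗[k] N) :
    TensorProduct.lid k Q (TensorProduct.map f u t)
      = u (TensorProduct.lid k N (TensorProduct.map f LinearMap.id t)) := by
  induction t using TensorProduct.induction_on with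
  | zero => simp
  | tmul m n => simp
  | add s t hs ht => simp [hs, ht]

theorem rid_map_comp (u : M →ₗ[k] P) (f : N →ₗ[k] k) (t : M ⊗[k] N) :
    TensorProduct.rid k P (TensorProduct.map u f t)
      = u (TensorProduct.rid k M (TensorProduct.map LinearMap.id f t)) := by
  induction t using TensorProduct.induction_on with
  | zero => simp
  | tmul m n => simp
  | add s t hs ht => simp [hs, ht]

theorem pairing_comm (ν : M →ₗ[k] k) (μ' : N →ₗ[k] k) (t : M ⊗[k] N) :
    μ' (TensorProduct.lid k N (TensorProduct.map ν LinearMap.id t))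
      = ν (TensorProduct.rid k M (TensorProduct.map LinearMap.id μ' t)) := by
  induction t using TensorProduct.induction_on with
  | zero => simp
  | tmul m n => simp [smul_eq_mul, mul_comm]
  | add s t hs ht => simp [hs, ht]

theorem map_smulRight_left (f : M →ₗ[k] k) (E : P) (u : N →ₗ[k] Q) :
    TensorProduct.map (f.smulRight E) u
      = TensorProduct.mk k P Q E ∘ₗ (TensorProduct.lid k Q).toLinearMap
          ∘ₗ TensorProduct.map f u := by
  apply TensorProduct.ext'
  intro m n
  simp [TensorProduct.smul_tmul]

theorem map_smulRight_right (u : M →ₗ[k] P) (f : N →ₗ[k] k) (c : Q) :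
    TensorProduct.map u (f.smulRight c)
      = (TensorProduct.mk k P Q).flip c ∘ₗ (TensorProduct.rid k P).toLinearMap
          ∘ₗ TensorProduct.map u f := by
  apply TensorProduct.ext'
  intro m n
  simp [TensorProduct.smul_tmul]

theorem map_zero_left' (u : N →ₗ[k] Q) :
    (TensorProduct.map (0 : M →ₗ[k] P) u) = 0 := by
  apply TensorProduct.ext'
  intro m n
  simp

end AuxTensor

namespace HopfGCoalgebra

variable {k : Type*} [Field k] {G : Type*} [Group G]
  {H : G → Type*} [∀ g, AddCommGroup (H g)] [∀ g, Module k (H g)]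
  (A : HopfGCoalgebra k G H)

/-- right multiplication by `x` -/
noncomputable def mulBy (g : G) (x : H g) : H g →ₗ[k] H g :=
  A.mul g ∘ₗ (TensorProduct.mk k (H g) (H g)).flip x

@[simp] theorem mulBy_apply (g : G) (x z : H g) :
    A.mulBy g x z = A.mul g (z ⊗ₜ[k] x) := rfl

/-- left multiplication by `a` -/
noncomputable def lmulBy (g : G) (a : H g) : H g →ₗ[k] H g :=
  A.mul g ∘ₗ TensorProduct.mk k (H g) (H g) a

@[simp] theorem lmulBy_apply (g : G) (a z : H g) :
    A.lmulBy g a z = A.mul g (a ⊗ₜ[k] z) := rfl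

theorem comul_cast {a b a' b' : G} (ha : a = a') (hb : b = b') (hab : a * b = a' * b')
    (x : H (a * b)) :
    A.comul a' b' (castLM k H hab x)
      = TensorProduct.map (castLM k H ha) (castLM k H hb) (A.comul a b x) := by
  subst ha; subst hb
  simp only [castLM_eq_id, TensorProduct.map_id, LinearMap.id_apply]

theorem S_cast {a b : G} (h : a = b) (hi : a⁻¹ = b⁻¹) (x : H a) :
    A.S b (castLM k H h x) = castLM k H hi (A.S a x) := by
  subst h; rfl

theorem counit_left' {a : G} (ha : a = 1) (b : G) (hab : a * b = b) (x : H (a * b)) :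
    TensorProduct.lid k (H b)
        (TensorProduct.map (A.counit ∘ₗ castLM k H ha) LinearMap.id (A.comul a b x))
      = castLM k H hab x := by
  subst ha
  simpa only [castLM_eq_id, LinearMap.comp_id] using A.counit_left b x

theorem counit_right' (a : G) {b : G} (hb : b = 1) (hab : a * b = a) (x : H (a * b)) :
    TensorProduct.rid k (H a)
        (TensorProduct.map LinearMap.id (A.counit ∘ₗ castLM k H hb) (A.comul a b x))
      = castLM k H hab x := by
  subst hb
  simpa only [castLM_eq_id, LinearMap.comp_id] using A.counit_right a x

theorem antipode_right' (g : G) (y : H (g⁻¹ * g)) :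
    A.mul g⁻¹ (TensorProduct.map LinearMap.id (A.S g) (A.comul g⁻¹ g y))
      = A.counit (castLM k H (inv_mul_cancel g) y) • A.one g⁻¹ := by
  have h := A.antipode_right g⁻¹
    (castLM k H (show g⁻¹ * g = g⁻¹ * (g⁻¹)⁻¹ by rw [inv_inv]) y)
  rw [A.comul_cast rfl (inv_inv g).symm
      (show g⁻¹ * g = g⁻¹ * (g⁻¹)⁻¹ by rw [inv_inv]) y] at h
  rw [map_map'] at h
  have hS : (castLM k H (inv_inv g⁻¹) ∘ₗ A.S (g⁻¹)⁻¹) ∘ₗ castLM k H (inv_inv g).symm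
      = A.S g := by
    apply LinearMap.ext
    intro z
    simp only [LinearMap.comp_apply]
    rw [A.S_cast (inv_inv g).symm (show g⁻¹ = ((g⁻¹)⁻¹)⁻¹ by rw [inv_inv]) z,
      castLM_castLM, castLM_eq_id, LinearMap.id_apply]
  rw [hS, castLM_castLM] at h
  have hid : (LinearMap.id ∘ₗ castLM k H (rfl : g⁻¹ = g⁻¹) : H g⁻¹ →ₗ[k] H g⁻¹)
      = LinearMap.id := rfl
  rw [hid] at h
  exact h



/-- The operator `z ↦ E · z` (componentwise product) on `H g ⊗ H g⁻¹`. -/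
noncomputable def Theta (g : G) (E : H g ⊗[k] H g⁻¹) :
    H g ⊗[k] H g⁻¹ →ₗ[k] H g ⊗[k] H g⁻¹ :=
  TensorProduct.map (A.mul g) (A.mul g⁻¹)
    ∘ₗ (TensorProduct.tensorTensorTensorComm k (H g) (H g⁻¹) (H g) (H g⁻¹)).toLinearMap
    ∘ₗ TensorProduct.mk k (H g ⊗[k] H g⁻¹) (H g ⊗[k] H g⁻¹) E

theorem Theta_apply (g : G) (E z : H g ⊗[k] H g⁻¹) :
    A.Theta g E z = TensorProduct.map (A.mul g) (A.mul g⁻¹)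
      ((TensorProduct.tensorTensorTensorComm k (H g) (H g⁻¹) (H g) (H g⁻¹))
        (E ⊗ₜ[k] z)) := rfl

theorem Theta_zero (g : G) : A.Theta g 0 = 0 := by
  apply TensorProduct.ext'
  intro p q
  simp [Theta_apply]

theorem Theta_add (g : G) (E1 E2 : H g ⊗[k] H g⁻¹) :
    A.Theta g (E1 + E2) = A.Theta g E1 + A.Theta g E2 := by
  apply TensorProduct.ext'
  intro p q
  simp [Theta_apply, TensorProduct.add_tmul]

theorem Theta_tmul (g : G) (a : H g) (b : H g⁻¹) :
    A.Theta g (a ⊗ₜ[k] b)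
      = TensorProduct.map (A.lmulBy g a) (A.lmulBy g⁻¹ b) := by
  apply TensorProduct.ext'
  intro p q
  simp [Theta_apply]

theorem chi_step (g : G) (a : H g) (b : H g⁻¹)
    (t : (H g ⊗[k] H g⁻¹) ⊗[k] H g) :
    TensorProduct.map LinearMap.id (A.mul g⁻¹)
        ((TensorProduct.assoc k (H g) (H g⁻¹) (H g⁻¹))
          (TensorProduct.map (TensorProduct.map (A.lmulBy g a) (A.lmulBy g⁻¹ b)) (A.S g) t))
      = TensorProduct.map (A.lmulBy g a)
          (A.lmulBy g⁻¹ b ∘ₗ A.mul g⁻¹ ∘ₗ TensorProduct.map LinearMap.id (A.S g))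
          ((TensorProduct.assoc k (H g) (H g⁻¹) (H g)) t) := by
  have hmaps :
      (TensorProduct.map LinearMap.id (A.mul g⁻¹)
        ∘ₗ (TensorProduct.assoc k (H g) (H g⁻¹) (H g⁻¹)).toLinearMap
        ∘ₗ TensorProduct.map (TensorProduct.map (A.lmulBy g a) (A.lmulBy g⁻¹ b)) (A.S g))
      = (TensorProduct.map (A.lmulBy g a)
          (A.lmulBy g⁻¹ b ∘ₗ A.mul g⁻¹ ∘ₗ TensorProduct.map LinearMap.id (A.S g))
        ∘ₗ (TensorProduct.assoc k (H g) (H g⁻¹) (H g)).toLinearMap) := by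
    apply TensorProduct.ext_threefold
    intro p q r
    simp only [LinearMap.comp_apply, LinearEquiv.coe_coe, TensorProduct.map_tmul,
      TensorProduct.assoc_tmul, LinearMap.id_apply, lmulBy_apply]
    rw [A.mul_assoc']
  exact congrFun (congrArg (fun (f : _ →ₗ[k] _) => (f : _ → _)) hmaps) t

/-- Right leg collapse: `(id ⊗ (m ∘ (id ⊗ S) ∘ Δ))(Δ x̃) = x ⊗ 1`. -/
theorem B0' (g : G) (x : H g) (la : H g →ₗ[k] H g) (lb : H g⁻¹ →ₗ[k] H g⁻¹) :
    TensorProduct.map la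
        (lb ∘ₗ A.mul g⁻¹ ∘ₗ TensorProduct.map LinearMap.id (A.S g) ∘ₗ A.comul g⁻¹ g)
        (A.comul g (g⁻¹ * g)
          (castLM k H (show g = g * (g⁻¹ * g) by rw [inv_mul_cancel, mul_one]) x))
      = la x ⊗ₜ[k] lb (A.one g⁻¹) := by
  have hW : (lb ∘ₗ A.mul g⁻¹ ∘ₗ TensorProduct.map LinearMap.id (A.S g) ∘ₗ A.comul g⁻¹ g)
      = (A.counit ∘ₗ castLM k H (inv_mul_cancel g)).smulRight (lb (A.one g⁻¹)) := by
    apply LinearMap.ext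
    intro y
    simp only [LinearMap.comp_apply, LinearMap.smulRight_apply]
    rw [A.antipode_right' g y, map_smul]
  rw [hW, map_smulRight_right]
  simp only [LinearMap.comp_apply, LinearEquiv.coe_coe]
  rw [rid_map_comp, A.counit_right' g (inv_mul_cancel g)
      (show g * (g⁻¹ * g) = g by rw [inv_mul_cancel, mul_one])]
  rw [castLM_castLM, castLM_eq_id, LinearMap.id_apply]
  rfl

theorem KB (e0 : H (1 : G)) (g : G) (x : H g) (E' : H g ⊗[k] H g⁻¹) :
    TensorProduct.map LinearMap.id (A.mul g⁻¹)
        ((TensorProduct.assoc k (H g) (H g⁻¹) (H g⁻¹))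
          (TensorProduct.map (A.Theta g E') (A.S g)
            (TensorProduct.map (A.comul g g⁻¹) LinearMap.id
              (A.comul (g * g⁻¹) g
                (castLM k H (show g = g * g⁻¹ * g by rw [mul_inv_cancel, one_mul]) x)))))
      = TensorProduct.map (A.mulBy g x) LinearMap.id E' := by
  induction E' using TensorProduct.induction_on with
  | zero =>
      rw [Theta_zero, map_zero_left']
      simp
  | add s t hs ht =>
      rw [Theta_add, TensorProduct.map_add_left, LinearMap.add_apply]
      simp only [map_add]
      rw [hs, ht]
  | tmul a b =>
      rw [Theta_tmul, chi_step, A.coassoc g g⁻¹ g, castLM_castLM]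
      rw [map_map']
      have hcomp : (A.lmulBy g a ∘ₗ LinearMap.id : H g →ₗ[k] H g) = A.lmulBy g a := by
        rfl
      rw [hcomp]
      have := A.B0' g x (A.lmulBy g a) (A.lmulBy g⁻¹ b)
      rw [show ((A.lmulBy g⁻¹ b ∘ₗ A.mul g⁻¹ ∘ₗ TensorProduct.map LinearMap.id (A.S g))
            ∘ₗ A.comul g⁻¹ g)
          = (A.lmulBy g⁻¹ b ∘ₗ A.mul g⁻¹ ∘ₗ TensorProduct.map LinearMap.id (A.S g)
            ∘ₗ A.comul g⁻¹ g) from rfl]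
      rw [this]
      simp only [TensorProduct.map_tmul, lmulBy_apply, mulBy_apply, LinearMap.id_apply]
      rw [A.mul_one']

theorem rightCointegral_cast (e : H (1 : G)) (her : A.RightCointegral e)
    {a : G} (h : (1 : G) = a) (y : H a) :
    A.mul a (castLM k H h e ⊗ₜ[k] y)
      = A.counit (castLM k H h.symm y) • castLM k H h e := by
  subst h
  simpa only [castLM_eq_id, LinearMap.id_apply] using her y

theorem chiE (g : G) (t : H g ⊗[k] H g⁻¹) (w : H g⁻¹) :
    TensorProduct.map LinearMap.id (A.mul g⁻¹)
        ((TensorProduct.assoc k (H g) (H g⁻¹) (H g⁻¹)) (t ⊗ₜ[k] w))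
      = TensorProduct.map LinearMap.id (A.mulBy g⁻¹ w) t := by
  induction t using TensorProduct.induction_on with
  | zero => simp
  | tmul p q => simp
  | add s t hs ht => rw [TensorProduct.add_tmul, map_add, map_add, hs, ht, map_add]

theorem L1 (e : H (1 : G)) (her : A.RightCointegral e) (g : G) (x : H g) :
    TensorProduct.map (A.mulBy g x) LinearMap.id
        (A.comul g g⁻¹ (castLM k H (mul_inv_cancel g).symm e))
      = TensorProduct.map LinearMap.id (A.mulBy g⁻¹ (A.S g x))
        (A.comul g g⁻¹ (castLM k H (mul_inv_cancel g).symm e)) := by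
  rw [← A.KB e g x (A.comul g g⁻¹ (castLM k H (mul_inv_cancel g).symm e))]
  rw [map_map']
  have hPhi : A.Theta g (A.comul g g⁻¹ (castLM k H (mul_inv_cancel g).symm e))
        ∘ₗ A.comul g g⁻¹
      = (A.counit ∘ₗ castLM k H (mul_inv_cancel g)).smulRight
          (A.comul g g⁻¹ (castLM k H (mul_inv_cancel g).symm e)) := by
    apply LinearMap.ext
    intro y
    simp only [LinearMap.comp_apply, LinearMap.smulRight_apply]
    rw [Theta_apply, ← A.comul_mul g g⁻¹ (castLM k H (mul_inv_cancel g).symm e) y]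
    rw [A.rightCointegral_cast e her (mul_inv_cancel g).symm y, map_smul]
  rw [hPhi]
  rw [show A.S g ∘ₗ (LinearMap.id : H g →ₗ[k] H g) = A.S g from rfl]
  rw [map_smulRight_left]
  simp only [LinearMap.comp_apply, LinearEquiv.coe_coe]
  rw [lid_map_comp]
  rw [A.counit_left' (mul_inv_cancel g) g
      (show g * g⁻¹ * g = g by rw [mul_inv_cancel, one_mul])]
  rw [castLM_castLM, castLM_eq_id, LinearMap.id_apply]
  rw [TensorProduct.mk_apply, chiE]

theorem formulaF (e : H (1 : G)) (her : A.RightCointegral e)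
    (μ : ∀ g : G, H g →ₗ[k] k) (hμr : A.RightGIntegral μ) (hμ1e : μ 1 e = 1)
    (g : G) (x : H g) :
    A.S g x = TensorProduct.lid k (H g⁻¹)
      (TensorProduct.map (μ g ∘ₗ A.mulBy g x) LinearMap.id
        (A.comul g g⁻¹ (castLM k H (mul_inv_cancel g).symm e))) := by
  have h := congrArg (fun t => TensorProduct.lid k (H g⁻¹)
      (TensorProduct.map (μ g) LinearMap.id t)) (A.L1 e her g x)
  rw [map_map', map_map'] at h
  rw [show (LinearMap.id ∘ₗ LinearMap.id : H g⁻¹ →ₗ[k] H g⁻¹) = LinearMap.id from rfl] at h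
  rw [show (μ g ∘ₗ LinearMap.id : H g →ₗ[k] k) = μ g from rfl] at h
  rw [show (LinearMap.id ∘ₗ A.mulBy g⁻¹ (A.S g x) : H g⁻¹ →ₗ[k] H g⁻¹)
      = A.mulBy g⁻¹ (A.S g x) from rfl] at h
  rw [lid_map_comp (μ g) (A.mulBy g⁻¹ (A.S g x))] at h
  have hE2 : TensorProduct.lid k (H g⁻¹) (TensorProduct.map (μ g) LinearMap.id
      (A.comul g g⁻¹ (castLM k H (mul_inv_cancel g).symm e))) = A.one g⁻¹ := by
    rw [hμr g g⁻¹ (castLM k H (mul_inv_cancel g).symm e),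
      fam_apply_cast μ (mul_inv_cancel g).symm e, hμ1e, one_smul]
  rw [hE2] at h
  rw [h, mulBy_apply, A.one_mul']

end HopfGCoalgebra

theorem integral_antipode_invariance' {k : Type*} [Field k] {G : Type*} [Group G]
    {H : G → Type*} [∀ g, AddCommGroup (H g)] [∀ g, Module k (H g)]
    (A : HopfGCoalgebra k G H)
    (μ : ∀ g : G, H g →ₗ[k] k)
    (hμl : A.LeftGIntegral μ) (hμr : A.RightGIntegral μ)
    (e : H (1 : G)) (hel : A.LeftCointegral e) (her : A.RightCointegral e)
    (hnorm : μ 1 e = 1) :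
    (∀ (g : G) (x : H g), μ g⁻¹ (A.S g x) = μ g x) ∧
      castLM k H (inv_one (G := G)) (A.S 1 e) = e := by
  constructor
  · intro g x
    rw [A.formulaF e her μ hμr hnorm g x, pairing_comm]
    have hE1 : TensorProduct.rid k (H g) (TensorProduct.map LinearMap.id (μ g⁻¹)
        (A.comul g g⁻¹ (castLM k H (mul_inv_cancel g).symm e))) = A.one g := by
      rw [hμl g g⁻¹ (castLM k H (mul_inv_cancel g).symm e),
        fam_apply_cast μ (mul_inv_cancel g).symm e, hnorm, one_smul]
    rw [hE1]
    simp only [LinearMap.comp_apply, HopfGCoalgebra.mulBy_apply]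
    rw [A.one_mul']
  · have hF := A.formulaF e her μ hμr hnorm 1 e
    have hcounit : (μ 1 ∘ₗ A.mulBy 1 e) = A.counit := by
      apply LinearMap.ext
      intro z
      simp only [LinearMap.comp_apply, HopfGCoalgebra.mulBy_apply]
      rw [hel z, map_smul, hnorm, smul_eq_mul, mul_one]
    rw [hcounit] at hF
    rw [A.counit_left (1 : G)⁻¹ (castLM k H (mul_inv_cancel 1).symm e)] at hF
    rw [hF, castLM_castLM, castLM_castLM, castLM_eq_id, LinearMap.id_apply]
/-- For an involutory Hopf `G`-coalgebra of finite type with nonzero two-sided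
`G`-integral `μ` and nonzero cointegral `e ∈ H 1` with `μ 1 e = 1`, one has
`μ g⁻¹ ∘ S g = μ g` for all `g` and `S 1 e = e`. -/
theorem integral_antipode_invariance (A : HopfGCoalgebra k G H) (hinv : A.Involutory)
    [∀ g, FiniteDimensional k (H g)]
    (μ : ∀ g : G, H g →ₗ[k] k)
    (hμl : A.LeftGIntegral μ) (hμr : A.RightGIntegral μ)
    (hμne : ∃ (g : G) (x : H g), μ g x ≠ 0)
    (e : H (1 : G)) (hel : A.LeftCointegral e) (her : A.RightCointegral e)
    (hene : e ≠ 0) (hnorm : μ 1 e = 1) :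
    (∀ (g : G) (x : H g), μ g⁻¹ (A.S g x) = μ g x) ∧
      castLM k H (inv_one (G := G)) (A.S 1 e) = e := by
  exact integral_antipode_invariance' A μ hμl hμr e hel her hnorm
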